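/- Let F₁,...,Fₘ ∈ k[X₁,...,Xₘ] with det Jac(F₁,...,Fₘ) ∈ k*, and let P₁,...,Pₘ ∈ k[X₁,...,Xₘ]. Then the system Fᵢ(𝒲₁(t),...,𝒲ₘ(t)) = tXᵢ + (1-t)Fᵢ(P₁,...,Pₘ) for all i, with initial conditions 𝒲ᵢ(0) = Pᵢ, has a unique solution 𝒲₁(t),...,𝒲ₘ(t) ∈ k[X₁,...,Xₘ][[t]]. -/

import Mathlib

/-!
Since the constant coefficients are prescribed, the problem is to determine the higher
coefficients of `W` one at a time. If two tuples of power series agree modulo `t ^ n` with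
`n > 0`, first-order Taylor expansion of `Fᵢ` (whose remainder lies in `t ^ (2n)`) shows that
the `n`-th coefficients of `Fᵢ(W)` differ by the Jacobian of `F` at the constant terms `P`
applied to the difference of the `n`-th coefficients of the tuples. As `det Jac(F)(P)` is a
unit, this forces uniqueness, and successive corrections by `Jac(F)(P)⁻¹` build a solution
of `Fᵢ(W) = Gᵢ` for any right-hand side `G` with `Gᵢ(0) = Fᵢ(P)`.
-/

open MvPolynomial

namespace MvPolynomial

variable {R S σ : Type*} [CommSemiring R] [CommRing S] [Algebra R S] [Fintype σ]

theorem aeval_sub_aeval_sub_sum_pderiv_mem_sq (I : Ideal S) (F : MvPolynomial σ R)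
    {A B : σ → S} (h : ∀ j, A j - B j ∈ I) :
    aeval A F - aeval B F - ∑ j, aeval B (pderiv j F) * (A j - B j) ∈ I ^ 2 := by
  classical
  induction F using MvPolynomial.induction_on with
  | C a => simp
  | add p q hp hq =>
    convert add_mem hp hq using 1
    simp only [map_add, add_mul, Finset.sum_add_distrib]
    ring
  | mul_X p i hp =>
    set L := ∑ j, aeval B (pderiv j p) * (A j - B j)
    have hL : L ∈ I := Ideal.sum_mem _ fun j _ => I.mul_mem_left _ (h j)
    have hsum : ∑ j, aeval B (pderiv j (p * X i)) * (A j - B j)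
        = L * B i + aeval B p * (A i - B i) := by
      simp only [Derivation.leibniz, smul_eq_mul, map_add, map_mul, aeval_X,
        add_mul, Finset.sum_add_distrib, L, Finset.sum_mul]
      rw [add_comm]
      congr 1
      · exact Finset.sum_congr rfl fun j _ => by ring
      · simp [pderiv_X, Pi.single_apply]
    rw [map_mul, map_mul, aeval_X, aeval_X, hsum]
    have hsplit : aeval A p * A i - aeval B p * B i - (L * B i + aeval B p * (A i - B i))
        = (aeval A p - aeval B p - L) * A i + L * (A i - B i) := by ring
    rw [hsplit]
    refine add_mem (Ideal.mul_mem_right _ _ hp) ?_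
    rw [pow_two]
    exact Ideal.mul_mem_mul hL (h i)

theorem aeval_sub_aeval_mem (I : Ideal S) (F : MvPolynomial σ R) {A B : σ → S}
    (h : ∀ j, A j - B j ∈ I) : aeval A F - aeval B F ∈ I := by
  have hL : ∑ j, aeval B (pderiv j F) * (A j - B j) ∈ I :=
    Ideal.sum_mem _ fun j _ => I.mul_mem_left _ (h j)
  simpa using
    add_mem (Ideal.pow_le_self two_ne_zero (aeval_sub_aeval_sub_sum_pderiv_mem_sq I F h)) hL

noncomputable def jacobianAt (F : σ → MvPolynomial σ R) (P : σ → S) : Matrix σ σ S :=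
  Matrix.of fun i j => aeval P (pderiv j (F i))

theorem det_jacobianAt {R : Type*} [CommRing R] [Algebra R S] [DecidableEq σ]
    (F : σ → MvPolynomial σ R) (P : σ → S) :
    (jacobianAt F P).det = aeval P (Matrix.of fun i j => pderiv j (F i)).det := by
  rw [AlgHom.map_det]
  rfl

end MvPolynomial

namespace PowerSeries

open Matrix

variable {S : Type*} [CommRing S]

theorem coeff_mul_of_X_pow_dvd (f : S⟦X⟧) {g : S⟦X⟧} {n : ℕ} (hg : X ^ n ∣ g) :
    coeff n (f * g) = constantCoeff f * coeff n g := by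
  obtain ⟨h, rfl⟩ := hg
  rw [mul_left_comm, coeff_X_pow_mul', coeff_X_pow_mul', if_pos le_rfl, if_pos le_rfl,
    Nat.sub_self, coeff_zero_eq_constantCoeff_apply, coeff_zero_eq_constantCoeff_apply, map_mul]

theorem X_pow_succ_dvd_of_coeff_eq_zero {f : S⟦X⟧} {n : ℕ} (h : X ^ n ∣ f)
    (hn : coeff n f = 0) : X ^ (n + 1) ∣ f :=
  X_pow_dvd_iff.2 fun l hl =>
    (Nat.lt_succ_iff_lt_or_eq.1 hl).elim (X_pow_dvd_iff.1 h l) fun hl => hl ▸ hn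

theorem eq_of_forall_X_pow_dvd_sub {f g : S⟦X⟧} (h : ∀ n, X ^ (n + 1) ∣ f - g) : f = g := by
  ext n
  simpa [sub_eq_zero] using X_pow_dvd_iff.1 (h n) n (Nat.lt_succ_self n)

variable {R σ : Type*} [CommSemiring R] [Algebra R S]

theorem constantCoeff_aeval (B : σ → S⟦X⟧) (F : MvPolynomial σ R) :
    constantCoeff (MvPolynomial.aeval B F) =
      MvPolynomial.aeval (fun j => constantCoeff (B j)) F := by
  induction F using MvPolynomial.induction_on with
  | C a => simp [algebraMap_apply]
  | add p q hp hq => simp [hp, hq]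
  | mul_X p i hp => simp [hp]

variable [Fintype σ]

theorem X_pow_dvd_aeval_sub_aeval (F : MvPolynomial σ R) {A B : σ → S⟦X⟧} {n : ℕ}
    (h : ∀ j, X ^ n ∣ A j - B j) : X ^ n ∣ MvPolynomial.aeval A F - MvPolynomial.aeval B F :=
  Ideal.mem_span_singleton.1 <|
    MvPolynomial.aeval_sub_aeval_mem _ F fun j => Ideal.mem_span_singleton.2 (h j)

theorem coeff_aeval_eq_add_jacobianAt_mulVec (F : σ → MvPolynomial σ R) (i : σ)
    {A B : σ → S⟦X⟧} {n : ℕ} (hn : 0 < n) (h : ∀ j, X ^ n ∣ A j - B j) :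
    coeff n (MvPolynomial.aeval A (F i)) = coeff n (MvPolynomial.aeval B (F i)) +
      (jacobianAt F (fun j => constantCoeff (B j)) *ᵥ fun j => coeff n (A j - B j)) i := by
  have hT := MvPolynomial.aeval_sub_aeval_sub_sum_pderiv_mem_sq (Ideal.span {X ^ n}) (F i)
    fun j => Ideal.mem_span_singleton.2 (h j)
  rw [Ideal.span_singleton_pow, Ideal.mem_span_singleton, ← pow_mul] at hT
  have hcoeff := X_pow_dvd_iff.1 hT n (by omega)
  simp only [map_sub, map_sum, coeff_mul_of_X_pow_dvd _ (h _), constantCoeff_aeval] at hcoeff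
  simp only [Matrix.mulVec, dotProduct, jacobianAt, Matrix.of_apply, map_sub]
  linear_combination hcoeff

variable [DecidableEq σ]

theorem eq_of_aeval_eq_of_isUnit_jacobianAt (F : σ → MvPolynomial σ R) {P : σ → S}
    (hJ : IsUnit (jacobianAt F P)) {W W' : σ → S⟦X⟧}
    (hF : ∀ i, MvPolynomial.aeval W (F i) = MvPolynomial.aeval W' (F i))
    (hP : ∀ j, constantCoeff (W j) = P j) (hP' : ∀ j, constantCoeff (W' j) = P j) :
    W = W' := by
  have hdvd : ∀ n j, X ^ (n + 1) ∣ W j - W' j := by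
    intro n
    induction n with
    | zero => exact fun j => by simp [X_dvd_iff, hP, hP']
    | succ n ih =>
      have hJW' : jacobianAt F (fun j => constantCoeff (W' j)) = jacobianAt F P := by
        simp only [hP']
      have hcoeff : (fun j => coeff (n + 1) (W j - W' j)) = 0 := by
        refine mulVec_injective_of_isUnit hJ ?_
        rw [mulVec_zero]
        funext i
        have := coeff_aeval_eq_add_jacobianAt_mulVec F i n.add_one_pos ih
        rwa [hF, hJW', left_eq_add] at this
      exact fun j => X_pow_succ_dvd_of_coeff_eq_zero (ih j) (congrFun hcoeff j)
  funext j
  exact eq_of_forall_X_pow_dvd_sub fun n => hdvd n j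

variable (F : σ → MvPolynomial σ R) (P : σ → S) (G : σ → S⟦X⟧)

/- Newton's method with the Jacobian frozen at `P`: step `n + 1` removes the coefficient of
`X ^ (n + 1)` from the residual `G - F(newtonApprox n)`. -/
noncomputable def newtonApprox : ℕ → σ → S⟦X⟧
  | 0 => fun j => C (P j)
  | n + 1 => fun j => newtonApprox n j + X ^ (n + 1) * C (((jacobianAt F P)⁻¹ *ᵥ
      fun i => coeff (n + 1) (G i - MvPolynomial.aeval (newtonApprox n) (F i))) j)

theorem constantCoeff_newtonApprox (n : ℕ) (j : σ) :
    constantCoeff (newtonApprox F P G n j) = P j := by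
  induction n with
  | zero => simp [newtonApprox]
  | succ n ih => simp [newtonApprox, ih]

theorem X_pow_dvd_newtonApprox_sub {l n : ℕ} (hln : l ≤ n) (j : σ) :
    X ^ (l + 1) ∣ newtonApprox F P G n j - newtonApprox F P G l j := by
  induction n, hln using Nat.le_induction with
  | base => simp
  | succ n hln ih =>
    rw [← sub_add_sub_cancel _ (newtonApprox F P G n j)]
    refine dvd_add ((pow_dvd_pow X (by omega : l + 1 ≤ n + 1)).trans ?_) ih
    simp only [newtonApprox, add_sub_cancel_left]
    exact dvd_mul_right _ _

theorem X_pow_dvd_sub_aeval_newtonApprox (hJ : IsUnit (jacobianAt F P).det)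
    (hG : ∀ i, constantCoeff (G i) = MvPolynomial.aeval P (F i)) (n : ℕ) (i : σ) :
    X ^ (n + 1) ∣ G i - MvPolynomial.aeval (newtonApprox F P G n) (F i) := by
  induction n generalizing i with
  | zero =>
    rw [zero_add, pow_one, X_dvd_iff, map_sub, constantCoeff_aeval, hG]
    simp [newtonApprox]
  | succ n ih =>
    set T := newtonApprox F P G
    have hstep : ∀ j, X ^ (n + 1) ∣ T (n + 1) j - T n j :=
      X_pow_dvd_newtonApprox_sub F P G n.le_succ
    have hJT : jacobianAt F (fun j => constantCoeff (T n j)) = jacobianAt F P := by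
      simp only [T, constantCoeff_newtonApprox]
    rw [← sub_sub_sub_cancel_right _ _ (MvPolynomial.aeval (T n) (F i))]
    refine X_pow_succ_dvd_of_coeff_eq_zero
      (dvd_sub (ih i) (X_pow_dvd_aeval_sub_aeval _ hstep)) ?_
    rw [map_sub, map_sub, map_sub, coeff_aeval_eq_add_jacobianAt_mulVec F i n.add_one_pos hstep,
      hJT]
    simp [T, newtonApprox, mulVec_mulVec, mul_nonsing_inv _ hJ]

noncomputable def newtonLimit (j : σ) : S⟦X⟧ :=
  mk fun n => coeff n (newtonApprox F P G n j)

theorem X_pow_dvd_newtonLimit_sub_newtonApprox (n : ℕ) (j : σ) :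
    X ^ (n + 1) ∣ newtonLimit F P G j - newtonApprox F P G n j := by
  refine X_pow_dvd_iff.2 fun l hl => ?_
  have := X_pow_dvd_iff.1 (X_pow_dvd_newtonApprox_sub F P G (Nat.lt_succ_iff.1 hl) j) l
  simp_all [newtonLimit, sub_eq_zero]

theorem aeval_newtonLimit (hJ : IsUnit (jacobianAt F P).det)
    (hG : ∀ i, constantCoeff (G i) = MvPolynomial.aeval P (F i)) (i : σ) :
    MvPolynomial.aeval (newtonLimit F P G) (F i) = G i := by
  refine (eq_of_forall_X_pow_dvd_sub fun n => ?_).symm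
  rw [← sub_sub_sub_cancel_right _ _ (MvPolynomial.aeval (newtonApprox F P G n) (F i))]
  exact dvd_sub (X_pow_dvd_sub_aeval_newtonApprox F P G hJ hG n i)
    (X_pow_dvd_aeval_sub_aeval _ (X_pow_dvd_newtonLimit_sub_newtonApprox F P G n))

theorem constantCoeff_newtonLimit (j : σ) : constantCoeff (newtonLimit F P G j) = P j := by
  simp [newtonLimit, newtonApprox]

theorem existsUnique_aeval_eq_of_isUnit_det_jacobianAt (hJ : IsUnit (jacobianAt F P).det)
    (hG : ∀ i, constantCoeff (G i) = MvPolynomial.aeval P (F i)) :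
    ∃! W : σ → S⟦X⟧, (∀ i, MvPolynomial.aeval W (F i) = G i) ∧
      ∀ j, constantCoeff (W j) = P j := by
  refine ⟨newtonLimit F P G,
    ⟨aeval_newtonLimit F P G hJ hG, constantCoeff_newtonLimit F P G⟩, ?_⟩
  rintro W ⟨hWG, hWP⟩
  refine eq_of_aeval_eq_of_isUnit_jacobianAt F ((isUnit_iff_isUnit_det _).2 hJ) (fun i => ?_)
    hWP (constantCoeff_newtonLimit F P G)
  rw [hWG, aeval_newtonLimit F P G hJ hG]

end PowerSeries

theorem stmt15_general (k : Type*) [Field k] (m : ℕ)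
    (F P : Fin m → MvPolynomial (Fin m) k)
    (hJ : ∃ c : k, c ≠ 0 ∧
      Matrix.det (Matrix.of fun i j => pderiv j (F i)) = C c) :
    ∃! W : Fin m → PowerSeries (MvPolynomial (Fin m) k),
      (∀ i, aeval W (F i) =
        PowerSeries.X * PowerSeries.C (X i) +
          (1 - PowerSeries.X) * PowerSeries.C (aeval P (F i))) ∧
      (∀ i, PowerSeries.constantCoeff (W i) = P i) := by
  obtain ⟨c, hc, hdet⟩ := hJ
  refine PowerSeries.existsUnique_aeval_eq_of_isUnit_det_jacobianAt F P _ ?_ fun i => by simp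
  rw [det_jacobianAt, hdet, aeval_C]
  exact hc.isUnit.map _

/-- If `det Jac(F₁,...,Fₘ)` is a nonzero constant and `P₁,...,Pₘ` are arbitrary
polynomials, then the system `Fᵢ(𝒲₁,...,𝒲ₘ) = tXᵢ + (1-t)Fᵢ(P₁,...,Pₘ)` with
`𝒲ᵢ(0) = Pᵢ` has a unique solution in `k[X₁,...,Xₘ][[t]]`. -/
theorem stmt15 (k : Type*) [Field k] [CharZero k] (m : ℕ)
    (F P : Fin m → MvPolynomial (Fin m) k)
    (hJ : ∃ c : k, c ≠ 0 ∧
      Matrix.det (Matrix.of fun i j => pderiv j (F i)) = C c) :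
    ∃! W : Fin m → PowerSeries (MvPolynomial (Fin m) k),
      (∀ i, aeval W (F i) =
        PowerSeries.X * PowerSeries.C (X i) +
          (1 - PowerSeries.X) * PowerSeries.C (aeval P (F i))) ∧
      (∀ i, PowerSeries.constantCoeff (W i) = P i) :=
  stmt15_general k m F P hJ
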